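/- arXiv:math/0608150 — 14 statements merged into one kernel-verified Lean document; each statement's English description precedes it below -/
import Mathlib

section
/- For all positive integers n, the sum over d from 1 to n of f(⌊n/d⌋) equals 2^n − 1. -/
/-- `f n` is the number of relatively prime subsets of `{1,2,...,n}`, i.e. the
number of nonempty subsets `A` of `{1,...,n}` with `gcd(A) = 1`. -/
def f (n : ℕ) : ℕ :=
  ((Finset.Icc 1 n).powerset.filter (fun A => A.Nonempty ∧ A.gcd id = 1)).card

theorem sum_f_floor_div (n : ℕ) (hn : 0 < n) :
    ∑ d ∈ Finset.Icc 1 n, f (n / d) = 2 ^ n - 1 := by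
  classical
  set S := (Finset.Icc 1 n).powerset.filter (fun A => A.Nonempty) with hS
  have hcard : S.card = 2 ^ n - 1 := by
    have h0 : (∅ : Finset ℕ) ∈ (Finset.Icc 1 n).powerset := by simp
    have he : S = (Finset.Icc 1 n).powerset.erase ∅ := by
      ext A
      simp [hS, Finset.nonempty_iff_ne_empty, and_comm]
    rw [he, Finset.card_erase_of_mem h0, Finset.card_powerset, Nat.card_Icc]
    simp
  have hfib := Finset.card_eq_sum_card_fiberwise
    (f := fun A : Finset ℕ => A.gcd id) (s := S) (t := Finset.Icc 1 n) ?_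
  · rw [hcard] at hfib
    rw [hfib]
    apply Finset.sum_congr rfl
    intro d hd
    obtain ⟨hd1, hdn⟩ := Finset.mem_Icc.mp hd
    have hd0 : 0 < d := hd1
    refine Finset.card_nbij' (fun B => B.image (fun b => d * b))
      (fun A => A.image (fun a => a / d)) ?_ ?_ ?_ ?_
    · -- forward lands in fiber
      intro B hB
      simp only [Finset.mem_coe, Finset.mem_filter, Finset.mem_powerset] at hB
      obtain ⟨hBsub, hBne, hBgcd⟩ := hB
      refine Finset.mem_filter.mpr ⟨Finset.mem_filter.mpr
        ⟨Finset.mem_powerset.mpr ?_, hBne.image _⟩, ?_⟩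
      · intro x hx
        simp only [Finset.mem_image] at hx
        obtain ⟨b, hb, rfl⟩ := hx
        obtain ⟨hb1, hb2⟩ := Finset.mem_Icc.mp (hBsub hb)
        refine Finset.mem_Icc.mpr ⟨Nat.one_le_iff_ne_zero.mpr (by positivity), ?_⟩
        calc d * b ≤ d * (n / d) := Nat.mul_le_mul_left d hb2
          _ = (n / d) * d := Nat.mul_comm _ _
          _ ≤ n := Nat.div_mul_le_self n d
      · show (B.image (fun b => d * b)).gcd id = d
        rw [Finset.gcd_image]
        have h1 : (B.gcd (id ∘ fun b => d * b)) = B.gcd (fun b => d * b) := rfl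
        rw [h1, Finset.gcd_mul_left]
        have h2 : (B.gcd fun b => b) = 1 := hBgcd
        simp [h2]
    · -- backward lands in f-set
      intro A hA
      simp only [Finset.mem_coe, hS, Finset.mem_filter, Finset.mem_powerset] at hA
      obtain ⟨⟨hAsub, hAne⟩, hAgcd⟩ := hA
      have hdvd : ∀ a ∈ A, d ∣ a := by
        intro a ha
        have := Finset.gcd_dvd (f := id) ha
        rwa [hAgcd] at this
      have h2 : d * A.gcd (fun a => a / d) = d := by
        have h3 : A.gcd (fun x => d * (x / d)) = A.gcd id :=
          Finset.gcd_congr rfl (fun a ha => Nat.mul_div_cancel' (hdvd a ha))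
        have h4 := Finset.gcd_mul_left (s := A) (f := fun a => a / d) (a := d)
        rw [h3, hAgcd] at h4
        simpa using h4.symm
      refine Finset.mem_filter.mpr ⟨Finset.mem_powerset.mpr ?_, hAne.image _, ?_⟩
      · intro x hx
        simp only [Finset.mem_image] at hx
        obtain ⟨a, ha, rfl⟩ := hx
        obtain ⟨ha1, ha2⟩ := Finset.mem_Icc.mp (hAsub ha)
        refine Finset.mem_Icc.mpr ⟨?_, Nat.div_le_div_right ha2⟩
        exact (Nat.one_le_div_iff hd0).mpr (Nat.le_of_dvd ha1 (hdvd a ha))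
      · show (A.image (fun a => a / d)).gcd id = 1
        rw [Finset.gcd_image]
        have h1 : A.gcd (id ∘ fun a => a / d) = A.gcd (fun a => a / d) := rfl
        rw [h1]
        exact Nat.eq_of_mul_eq_mul_left hd0 (h2.trans (mul_one d).symm)
    · -- left inverse
      intro B hB
      show (B.image (fun b => d * b)).image (fun a => a / d) = B
      rw [Finset.image_image]
      have : ((fun a => a / d) ∘ fun b => d * b) = id := by
        funext b; simp [Nat.mul_div_cancel_left _ hd0]
      rw [this, Finset.image_id]
    · -- right inverse
      intro A hA
      simp only [Finset.mem_coe, hS, Finset.mem_filter, Finset.mem_powerset] at hA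
      obtain ⟨⟨hAsub, hAne⟩, hAgcd⟩ := hA
      have hdvd : ∀ a ∈ A, d ∣ a := by
        intro a ha
        have := Finset.gcd_dvd (f := id) ha
        rwa [hAgcd] at this
      show (A.image (fun a => a / d)).image (fun b => d * b) = A
      rw [Finset.image_image]
      calc A.image ((fun b => d * b) ∘ fun a => a / d) = A.image id := by
            apply Finset.image_congr
            intro a ha
            simp only [Function.comp_apply, id]
            exact Nat.mul_div_cancel' (hdvd a ha)
        _ = A := Finset.image_id
  · -- gcd lands in Icc 1 n
    intro A hA
    simp only [Finset.mem_coe, hS, Finset.mem_filter, Finset.mem_powerset] at hA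
    obtain ⟨hAsub, hAne⟩ := hA
    obtain ⟨a, ha⟩ := hAne
    obtain ⟨ha1, ha2⟩ := Finset.mem_Icc.mp (hAsub ha)
    have hdvd : A.gcd id ∣ a := Finset.gcd_dvd ha
    refine Finset.mem_Icc.mpr ⟨?_, le_trans (Nat.le_of_dvd ha1 hdvd) ha2⟩
    rw [Nat.one_le_iff_ne_zero]
    intro h
    change A.gcd id = 0 at h
    rw [h] at hdvd
    omega
end

section
/- For all positive integers n, f(n) = ∑_{d=1}^{n} μ(d)·(2^{⌊n/d⌋} − 1), where μ is the Möbius function. -/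
/-!
Möbius inversion over the gcd: `[gcd A = 1] = ∑_{d ∣ gcd A} μ(d)`, and `d ∣ gcd A` exactly when
`A` consists of multiples of `d`. Summing over all nonempty `A` and exchanging the sums, `μ(d)` gets
weighted by the number `2 ^ ⌊n/d⌋ - 1` of nonempty sets of multiples of `d` in `{1, …, n}`.
-/

open Finset ArithmeticFunction

theorem Finset.card_powerset_filter_nonempty {α : Type*} [DecidableEq α] (s : Finset α) :
    #{A ∈ s.powerset | A.Nonempty} = 2 ^ #s - 1 := by
  have : {A ∈ s.powerset | A.Nonempty} = s.powerset.erase ∅ := by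
    ext A
    simp [nonempty_iff_ne_empty, and_comm]
  rw [this, card_erase_of_mem (empty_mem_powerset s), card_powerset]

namespace Nat

theorem card_Icc_filter_dvd (n d : ℕ) : #{a ∈ Icc 1 n | d ∣ a} = n / d := by
  rw [← Ioc_filter_dvd_card_eq_div, ← Icc_add_one_left_eq_Ioc, zero_add]

theorem sum_divisors_moebius (m : ℕ) : ∑ d ∈ m.divisors, moebius d = if m = 1 then 1 else 0 := by
  rw [← coe_mul_zeta_apply, moebius_mul_coe_zeta, one_apply]

theorem sum_Icc_filter_dvd_moebius {g n : ℕ} (hg : g ∈ Icc 1 n) :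
    ∑ d ∈ Icc 1 n with d ∣ g, moebius d = if g = 1 then 1 else 0 := by
  obtain ⟨hg1, hgn⟩ := mem_Icc.mp hg
  have : {d ∈ Icc 1 n | d ∣ g} = g.divisors := by
    ext d
    simp only [mem_filter, mem_Icc, mem_divisors]
    constructor
    · rintro ⟨-, hd⟩
      exact ⟨hd, by omega⟩
    · rintro ⟨hd, -⟩
      exact ⟨⟨Nat.pos_of_dvd_of_pos hd hg1, (Nat.le_of_dvd hg1 hd).trans hgn⟩, hd⟩
  rw [this, sum_divisors_moebius]

theorem gcd_mem_Icc_of_subset {A : Finset ℕ} {n : ℕ} (hA : A ⊆ Icc 1 n) (hne : A.Nonempty) :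
    A.gcd id ∈ Icc 1 n := by
  obtain ⟨a, ha⟩ := hne
  obtain ⟨ha1, han⟩ := mem_Icc.mp (hA ha)
  have hdvd : A.gcd id ∣ a := Finset.gcd_dvd ha
  exact mem_Icc.mpr ⟨Nat.pos_of_dvd_of_pos hdvd ha1, (Nat.le_of_dvd ha1 hdvd).trans han⟩

theorem powerset_filter_dvd_gcd (S : Finset ℕ) (d : ℕ) :
    {A ∈ S.powerset | A.Nonempty ∧ d ∣ A.gcd id} = {A ∈ {a ∈ S | d ∣ a}.powerset | A.Nonempty} := by
  ext A
  simp only [mem_filter, mem_powerset, subset_iff, Finset.dvd_gcd_iff, id]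
  constructor
  · rintro ⟨hsub, hne, hdvd⟩
    exact ⟨fun a ha => ⟨hsub ha, hdvd a ha⟩, hne⟩
  · rintro ⟨hsub, hne⟩
    exact ⟨fun a ha => (hsub ha).1, hne, fun a ha => (hsub ha).2⟩

theorem card_coprime_subsets_eq_sum_moebius {S : Finset ℕ} {n : ℕ} (hS : S ⊆ Icc 1 n) :
    (#{A ∈ S.powerset | A.Nonempty ∧ A.gcd id = 1} : ℤ) =
      ∑ d ∈ Icc 1 n, moebius d * (2 ^ #{a ∈ S | d ∣ a} - 1) := by
  set P := {A ∈ S.powerset | A.Nonempty}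
  have hgcd : ∀ A ∈ P, A.gcd id ∈ Icc 1 n := fun A hA => by
    obtain ⟨hAS, hne⟩ := mem_filter.mp hA
    exact gcd_mem_Icc_of_subset ((mem_powerset.mp hAS).trans hS) hne
  calc (#{A ∈ S.powerset | A.Nonempty ∧ A.gcd id = 1} : ℤ)
      = ∑ A ∈ P, if A.gcd id = 1 then 1 else 0 := by
        rw [sum_boole, filter_filter]
    _ = ∑ A ∈ P, ∑ d ∈ Icc 1 n with d ∣ A.gcd id, moebius d :=
        sum_congr rfl fun A hA => (sum_Icc_filter_dvd_moebius (hgcd A hA)).symm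
    _ = ∑ d ∈ Icc 1 n, ∑ A ∈ P with d ∣ A.gcd id, moebius d := by
        simp only [sum_filter]
        exact sum_comm
    _ = ∑ d ∈ Icc 1 n, moebius d * (2 ^ #{a ∈ S | d ∣ a} - 1) := by
        refine sum_congr rfl fun d _ => ?_
        rw [sum_const, filter_filter, powerset_filter_dvd_gcd, card_powerset_filter_nonempty,
          nsmul_eq_mul]
        push_cast [Nat.one_le_two_pow]
        ring

end Nat

theorem f_eq_sum_moebius_general (n : ℕ) :
    (f n : ℤ) = ∑ d ∈ Finset.Icc 1 n,
      ArithmeticFunction.moebius d * (2 ^ (n / d) - 1) := by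
  simp only [f, Nat.card_coprime_subsets_eq_sum_moebius subset_rfl, Nat.card_Icc_filter_dvd]

theorem f_eq_sum_moebius (n : ℕ) (hn : 0 < n) :
    (f n : ℤ) = ∑ d ∈ Finset.Icc 1 n,
      ArithmeticFunction.moebius d * (2 ^ (n / d) - 1) :=
  f_eq_sum_moebius_general n
end

section
/- For all positive integers n and k, the sum over d from 1 to n of f_k(⌊n/d⌋) equals the binomial coefficient C(n,k). -/
/-- `fk n k` is the number of relatively prime subsets of `{1,2,...,n}` of
cardinality `k`, i.e. subsets `A` of `{1,...,n}` with `|A| = k` and `gcd(A) = 1`. -/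
def fk (n k : ℕ) : ℕ :=
  ((Finset.Icc 1 n).powerset.filter (fun A => A.card = k ∧ A.gcd id = 1)).card

theorem sum_fk_floor_div (n k : ℕ) (hn : 0 < n) (hk : 0 < k) :
    ∑ d ∈ Finset.Icc 1 n, fk (n / d) k = n.choose k := by
  have key : ∀ d ∈ Finset.Icc 1 n, fk (n / d) k =
      (((Finset.Icc 1 n).powerset.filter
        (fun A => A.card = k ∧ A.gcd id = d))).card := by
    intro d hd
    rw [Finset.mem_Icc] at hd
    have hd1 : 0 < d := hd.1
    unfold fk
    apply Finset.card_nbij' (fun A => A.image (· * d)) (fun B => B.image (· / d))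
    · intro A hA
      simp only [Finset.mem_coe, Finset.mem_filter, Finset.mem_powerset] at hA ⊢
      obtain ⟨hsub, hcard, hgcd⟩ := hA
      refine ⟨?_, ?_, ?_⟩
      · intro x hx
        simp only [Finset.mem_image] at hx
        obtain ⟨a, ha, rfl⟩ := hx
        have := hsub ha
        rw [Finset.mem_Icc] at this ⊢
        constructor
        · exact Nat.one_le_iff_ne_zero.2 (Nat.mul_ne_zero (by omega) (by omega))
        · exact (Nat.le_div_iff_mul_le hd1).1 this.2
      · rw [Finset.card_image_of_injective _ (fun a b h => Nat.eq_of_mul_eq_mul_right hd1 h)]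
        exact hcard
      · rw [Finset.gcd_image]
        have h2 : (A.gcd fun x => id x * d) = A.gcd id * normalize d := Finset.gcd_mul_right
        rw [normalize_eq, hgcd, one_mul] at h2
        simpa using h2
    · intro B hB
      simp only [Finset.mem_coe, Finset.mem_filter, Finset.mem_powerset] at hB ⊢
      obtain ⟨hsub, hcard, hgcd⟩ := hB
      have hdvd : ∀ b ∈ B, d ∣ b := fun b hb => hgcd ▸ Finset.gcd_dvd hb
      have hpos : ∀ b ∈ B, 0 < b := fun b hb => by
        have := hsub hb; rw [Finset.mem_Icc] at this; omega
      have himg : (B.image (· / d)).image (· * d) = B := by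
        rw [Finset.image_image]
        apply Finset.image_congr ?_ |>.trans Finset.image_id
        intro b hb
        exact Nat.div_mul_cancel (hdvd b hb)
      refine ⟨?_, ?_, ?_⟩
      · intro x hx
        simp only [Finset.mem_image] at hx
        obtain ⟨b, hb, rfl⟩ := hx
        have hbn := hsub hb
        rw [Finset.mem_Icc] at hbn ⊢
        constructor
        · have := Nat.le_of_dvd (hpos b hb) (hdvd b hb)
          exact Nat.one_le_div_iff hd1 |>.2 this
        · exact Nat.div_le_div_right hbn.2
      · rw [Finset.card_image_of_injOn]
        · exact hcard
        · intro a ha b hb h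
          have h' : a / d = b / d := h
          have ha' := Nat.div_mul_cancel (hdvd a ha)
          have hb' := Nat.div_mul_cancel (hdvd b hb)
          rw [← ha', ← hb', h']
      · have hg : (B.image (· / d)).gcd (id ∘ (· * d)) = d := by
          rw [← Finset.gcd_image, himg, hgcd]
        have h2 : ((B.image (· / d)).gcd fun x => id x * d) =
            (B.image (· / d)).gcd id * normalize d := Finset.gcd_mul_right
        rw [normalize_eq] at h2
        have h3 : (B.image (· / d)).gcd id * d = 1 * d := by
          rw [one_mul, ← h2]; exact hg
        exact Nat.eq_of_mul_eq_mul_right hd1 h3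
    · intro A hA
      beta_reduce
      rw [Finset.image_image]
      apply Finset.image_congr ?_ |>.trans Finset.image_id
      intro a _
      exact Nat.mul_div_cancel a hd1
    · intro B hB
      simp only [Finset.mem_coe, Finset.mem_filter, Finset.mem_powerset] at hB
      obtain ⟨hsub, hcard, hgcd⟩ := hB
      have hdvd : ∀ b ∈ B, d ∣ b := fun b hb => hgcd ▸ Finset.gcd_dvd hb
      beta_reduce
      rw [Finset.image_image]
      apply Finset.image_congr ?_ |>.trans Finset.image_id
      intro b hb
      exact Nat.div_mul_cancel (hdvd b hb)
  rw [Finset.sum_congr rfl key]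
  have hmaps : ∀ A ∈ (Finset.Icc 1 n).powerset.filter (fun A => A.card = k),
      A.gcd id ∈ Finset.Icc 1 n := by
    intro A hA
    simp only [Finset.mem_filter, Finset.mem_powerset] at hA
    obtain ⟨hsub, hcard⟩ := hA
    have hne : A.Nonempty := Finset.card_pos.1 (hcard ▸ hk)
    obtain ⟨a, ha⟩ := hne
    have han := hsub ha
    rw [Finset.mem_Icc] at han ⊢
    have hdvd : A.gcd id ∣ a := Finset.gcd_dvd ha
    constructor
    · exact Nat.pos_of_ne_zero fun h => by
        have := Nat.eq_zero_of_zero_dvd (h ▸ hdvd); omega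
    · exact le_trans (Nat.le_of_dvd (by omega) hdvd) han.2
  have hsum := Finset.card_eq_sum_card_fiberwise hmaps
  have hfilter : ∀ d, ((Finset.Icc 1 n).powerset.filter (fun A => A.card = k ∧ A.gcd id = d)) =
      (((Finset.Icc 1 n).powerset.filter (fun A => A.card = k)).filter (fun A => A.gcd id = d)) := by
    intro d
    rw [Finset.filter_filter]
  simp only [hfilter]
  rw [← hsum, ← Finset.powersetCard_eq_filter, Finset.card_powersetCard, Nat.card_Icc]
  norm_num
end

section
/- For all positive integers n and k, f_k(n) = ∑_{d=1}^{n} μ(d)·C(⌊n/d⌋, k), where μ is the Möbius function and C denotes the binomial coefficient. -/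
open Finset ArithmeticFunction
open scoped ArithmeticFunction.Moebius

lemma filter_powersetCard_forall_mem {α : Type*} (s : Finset α) (p : α → Prop) [DecidablePred p]
    (k : ℕ) : {A ∈ s.powersetCard k | ∀ a ∈ A, p a} = {a ∈ s | p a}.powersetCard k := by
  ext A
  simp only [mem_filter, mem_powersetCard, subset_iff]
  grind

lemma card_powersetCard_Icc_forall_dvd (n k d : ℕ) :
    #{A ∈ (Icc 1 n).powersetCard k | ∀ a ∈ A, d ∣ a} = (n / d).choose k := by
  rw [filter_powersetCard_forall_mem, card_powersetCard, ← Nat.Ioc_filter_dvd_card_eq_div]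
  rfl

lemma sum_moebius_Icc_filter_dvd {m n : ℕ} (hm : m ∈ Icc 1 n) :
    ∑ d ∈ Icc 1 n with d ∣ m, (μ d : ℤ) = if m = 1 then 1 else 0 := by
  rw [mem_Icc] at hm
  have hdivisors : {d ∈ Icc 1 n | d ∣ m} = m.divisors := by
    ext d
    simp only [mem_filter, mem_Icc, Nat.mem_divisors]
    constructor
    · rintro ⟨-, hd⟩
      exact ⟨hd, by omega⟩
    · rintro ⟨hd, -⟩
      have := Nat.le_of_dvd hm.1 hd
      exact ⟨⟨Nat.pos_of_dvd_of_pos hd hm.1, by omega⟩, hd⟩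
  rw [hdivisors, ← coe_mul_zeta_apply, moebius_mul_coe_zeta, one_apply]

lemma gcd_mem_Icc_of_subset {n : ℕ} {A : Finset ℕ} (hA : A.Nonempty) (hsub : A ⊆ Icc 1 n) :
    A.gcd id ∈ Icc 1 n := by
  obtain ⟨a, ha⟩ := hA
  have ha' := mem_Icc.1 (hsub ha)
  have hdvd : A.gcd id ∣ a := gcd_dvd ha
  exact mem_Icc.2 ⟨Nat.pos_of_dvd_of_pos hdvd ha'.1, (Nat.le_of_dvd ha'.1 hdvd).trans ha'.2⟩

theorem fk_eq_sum_moebius_general (n k : ℕ) (hk : 0 < k) :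
    (fk n k : ℤ) = ∑ d ∈ Finset.Icc 1 n,
      ArithmeticFunction.moebius d * ((n / d).choose k : ℤ) := by
  set P := (Icc 1 n).powersetCard k
  have hfk : fk n k = #{A ∈ P | A.gcd id = 1} := by
    rw [fk, ← filter_filter, ← powersetCard_eq_filter]
  have hgcd : ∀ A ∈ P, A.gcd id ∈ Icc 1 n := fun A hA => by
    obtain ⟨hsub, hcard⟩ := mem_powersetCard.1 hA
    exact gcd_mem_Icc_of_subset (card_pos.1 (hcard ▸ hk)) hsub
  calc (fk n k : ℤ) = ∑ A ∈ P, if A.gcd id = 1 then 1 else 0 := by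
        rw [hfk, natCast_card_filter]
    _ = ∑ A ∈ P, ∑ d ∈ Icc 1 n with d ∣ A.gcd id, (μ d : ℤ) :=
        sum_congr rfl fun A hA => (sum_moebius_Icc_filter_dvd (hgcd A hA)).symm
    _ = ∑ d ∈ Icc 1 n, ∑ A ∈ P with ∀ a ∈ A, d ∣ a, (μ d : ℤ) := by
        simp only [sum_filter, Finset.dvd_gcd_iff, id_eq]
        exact sum_comm
    _ = ∑ d ∈ Icc 1 n, μ d * ((n / d).choose k : ℤ) := by
        refine sum_congr rfl fun d _ => ?_
        rw [sum_const, card_powersetCard_Icc_forall_dvd, nsmul_eq_mul, mul_comm]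

theorem fk_eq_sum_moebius (n k : ℕ) (hn : 0 < n) (hk : 0 < k) :
    (fk n k : ℤ) = ∑ d ∈ Finset.Icc 1 n,
      ArithmeticFunction.moebius d * ((n / d).choose k : ℤ) :=
  fk_eq_sum_moebius_general n k hk
end

section
/- For all positive integers n and k, C(n,k) − C(⌊n/2⌋,k) − n·C(⌊n/3⌋,k) ≤ f_k(n) ≤ C(n,k) − C(⌊n/2⌋,k), where C denotes the binomial coefficient. -/
open Finset

theorem card_filter_dvd_Icc_one (n d : ℕ) : #{x ∈ Icc 1 n | d ∣ x} = n / d := by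
  rw [← zero_add 1, Icc_add_one_left_eq_Ioc]
  exact Nat.Ioc_filter_dvd_card_eq_div n d

theorem fk_eq_card_filter (n k : ℕ) : fk n k = #{A ∈ powersetCard k (Icc 1 n) | A.gcd id = 1} := by
  rw [fk, powersetCard_eq_filter, filter_filter]

theorem fk_add_card_filter_gcd_ne_one (n k : ℕ) :
    fk n k + #{A ∈ powersetCard k (Icc 1 n) | A.gcd id ≠ 1} = n.choose k := by
  rw [fk_eq_card_filter, card_filter_add_card_filter_not, card_powersetCard, Nat.card_Icc,
    Nat.add_sub_cancel]

theorem powersetCard_filter_dvd_subset {s : Finset ℕ} {d : ℕ} (hd : d ≠ 1) (k : ℕ) :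
    powersetCard k {x ∈ s | d ∣ x} ⊆ {A ∈ powersetCard k s | A.gcd id ≠ 1} := by
  intro A hA
  have hAs : A ⊆ {x ∈ s | d ∣ x} := (mem_powersetCard.1 hA).1
  have hd_dvd : d ∣ A.gcd id := dvd_gcd fun x hx => (mem_filter.1 (hAs hx)).2
  refine mem_filter.2 ⟨powersetCard_mono (filter_subset _ s) hA, fun h => hd ?_⟩
  rwa [h, Nat.dvd_one] at hd_dvd

theorem gcd_mem_Icc_one {A : Finset ℕ} {n : ℕ} (hA : A.Nonempty) (hAn : A ⊆ Icc 1 n) :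
    A.gcd id ∈ Icc 1 n := by
  obtain ⟨a, ha⟩ := hA
  have ha_mem : 1 ≤ a ∧ a ≤ n := mem_Icc.1 (hAn ha)
  have hpos : 0 < A.gcd id := Nat.pos_of_dvd_of_pos (gcd_dvd ha) ha_mem.1
  exact mem_Icc.2 ⟨hpos, (Nat.le_of_dvd ha_mem.1 (gcd_dvd ha)).trans ha_mem.2⟩

theorem filter_gcd_ne_one_subset_biUnion {n k : ℕ} (hk : 0 < k) :
    {A ∈ powersetCard k (Icc 1 n) | A.gcd id ≠ 1} ⊆
      (Icc 2 n).biUnion fun d => powersetCard k {x ∈ Icc 1 n | d ∣ x} := by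
  intro A hA
  obtain ⟨hA, hgcd⟩ := mem_filter.1 hA
  obtain ⟨hAn, hAk⟩ := mem_powersetCard.1 hA
  have hgcd_mem := mem_Icc.1 (gcd_mem_Icc_one (card_pos.1 (hAk ▸ hk)) hAn)
  refine mem_biUnion.2 ⟨A.gcd id, mem_Icc.2 ⟨by omega, hgcd_mem.2⟩, mem_powersetCard.2 ⟨?_, hAk⟩⟩
  exact fun x hx => mem_filter.2 ⟨hAn hx, gcd_dvd hx⟩

theorem choose_div_two_le_card_filter_gcd_ne_one (n k : ℕ) :
    (n / 2).choose k ≤ #{A ∈ powersetCard k (Icc 1 n) | A.gcd id ≠ 1} := by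
  calc (n / 2).choose k = #(powersetCard k {x ∈ Icc 1 n | 2 ∣ x}) := by
        rw [card_powersetCard, card_filter_dvd_Icc_one]
    _ ≤ _ := card_le_card (powersetCard_filter_dvd_subset (by norm_num) k)

theorem card_filter_gcd_ne_one_le_sum {n k : ℕ} (hk : 0 < k) :
    #{A ∈ powersetCard k (Icc 1 n) | A.gcd id ≠ 1} ≤ ∑ d ∈ Icc 2 n, (n / d).choose k := by
  calc _ ≤ #((Icc 2 n).biUnion fun d => powersetCard k {x ∈ Icc 1 n | d ∣ x}) :=
        card_le_card (filter_gcd_ne_one_subset_biUnion hk)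
    _ ≤ ∑ d ∈ Icc 2 n, #(powersetCard k {x ∈ Icc 1 n | d ∣ x}) := card_biUnion_le
    _ = ∑ d ∈ Icc 2 n, (n / d).choose k := by
        simp only [card_powersetCard, card_filter_dvd_Icc_one]

theorem sum_choose_div_le (n k : ℕ) :
    ∑ d ∈ Icc 2 n, (n / d).choose k ≤ (n / 2).choose k + n * (n / 3).choose k := by
  have hsub : Icc 2 n ⊆ insert 2 (Icc 3 n) := fun d hd => by
    simp only [mem_insert, mem_Icc] at hd ⊢
    omega
  have htail : ∑ d ∈ Icc 3 n, (n / d).choose k ≤ #(Icc 3 n) * (n / 3).choose k :=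
    sum_le_card_nsmul _ _ _ fun d hd =>
      Nat.choose_le_choose k (Nat.div_le_div_left (mem_Icc.1 hd).1 (by norm_num))
  have hcard : #(Icc 3 n) ≤ n := by simp
  calc ∑ d ∈ Icc 2 n, (n / d).choose k ≤ ∑ d ∈ insert 2 (Icc 3 n), (n / d).choose k :=
        sum_le_sum_of_subset hsub
    _ = (n / 2).choose k + ∑ d ∈ Icc 3 n, (n / d).choose k := sum_insert (by simp)
    _ ≤ (n / 2).choose k + n * (n / 3).choose k := by
        gcongr
        exact htail.trans (Nat.mul_le_mul_right _ hcard)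

theorem fk_bounds_general (n k : ℕ) (hk : 0 < k) :
    ((n.choose k : ℤ) - (n / 2).choose k - n * (n / 3).choose k) ≤ (fk n k : ℤ) ∧
      (fk n k : ℤ) ≤ (n.choose k : ℤ) - (n / 2).choose k := by
  have hsum := fk_add_card_filter_gcd_ne_one n k
  have hlower := choose_div_two_le_card_filter_gcd_ne_one n k
  have hupper := (card_filter_gcd_ne_one_le_sum (n := n) hk).trans (sum_choose_div_le n k)
  omega

theorem fk_bounds (n k : ℕ) (hn : 0 < n) (hk : 0 < k) :
    ((n.choose k : ℤ) - (n / 2).choose k - n * (n / 3).choose k) ≤ (fk n k : ℤ) ∧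
      (fk n k : ℤ) ≤ (n.choose k : ℤ) - (n / 2).choose k :=
  fk_bounds_general n k hk
end

section
/- Φ(1) = 1, and for every integer n ≥ 2, Φ(n) = ∑_{d|n} μ(d)·2^{n/d}, where the sum is over all positive divisors d of n and μ is the Möbius function. -/
/-!
Möbius inversion over the gcd: the indicator of `gcd(gcd A, n) = 1` is `∑ μ d` over the common
divisors `d` of `gcd A` and `n`. Exchanging the sums, each `d ∣ n` contributes `μ d` times the
number of subsets of `{1, …, n}` all of whose elements are multiples of `d`, i.e. `2 ^ (n / d)`.
For `n ≠ 1` the empty set (with gcd `0`) is never counted, so the nonemptiness condition is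
automatic.
-/

/-- `Phi n` is the number of nonempty subsets `A` of `{1,2,...,n}` such that
`gcd(A)` is relatively prime to `n`. -/
def Phi (n : ℕ) : ℕ :=
  ((Finset.Icc 1 n).powerset.filter
    (fun A => A.Nonempty ∧ Nat.gcd (A.gcd id) n = 1)).card

open ArithmeticFunction Finset
open scoped ArithmeticFunction.Moebius

theorem ArithmeticFunction.sum_divisors_moebius (m : ℕ) :
    ∑ d ∈ m.divisors, μ d = if m = 1 then 1 else 0 := by
  rw [← coe_mul_zeta_apply, moebius_mul_coe_zeta, one_apply]

theorem Nat.divisors_gcd_eq_filter {n : ℕ} (hn : n ≠ 0) (m : ℕ) :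
    (m.gcd n).divisors = {d ∈ n.divisors | d ∣ m} := by
  ext d
  simp only [Nat.mem_divisors, mem_filter, Nat.dvd_gcd_iff, ne_eq, Nat.gcd_eq_zero_iff]
  tauto

theorem ArithmeticFunction.sum_divisors_filter_dvd_moebius {n : ℕ} (hn : n ≠ 0) (m : ℕ) :
    ∑ d ∈ n.divisors with d ∣ m, μ d = if m.Coprime n then 1 else 0 := by
  rw [← Nat.divisors_gcd_eq_filter hn, sum_divisors_moebius]

theorem Finset.filter_dvd_gcd_powerset {ι α : Type*} [CommMonoidWithZero α]
    [NormalizedGCDMonoid α] [DecidableRel (α := α) (· ∣ ·)] (s : Finset ι) (f : ι → α) (a : α) :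
    {A ∈ s.powerset | a ∣ A.gcd f} = {i ∈ s | a ∣ f i}.powerset := by
  ext A
  simp only [mem_filter, mem_powerset, Finset.dvd_gcd_iff, subset_iff]
  grind

theorem card_powerset_Icc_filter_dvd_gcd (n d : ℕ) :
    #{A ∈ (Icc 1 n).powerset | d ∣ A.gcd id} = 2 ^ (n / d) := by
  rw [filter_dvd_gcd_powerset, card_powerset, ← Nat.Ioc_filter_dvd_card_eq_div]
  rfl

theorem Phi_eq_card_coprime {n : ℕ} (hn : n ≠ 1) :
    Phi n = #{A ∈ (Icc 1 n).powerset | (A.gcd id).Coprime n} := by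
  refine congrArg card (filter_congr fun A _ => and_iff_right_of_imp fun hA => ?_)
  rw [nonempty_iff_ne_empty]
  rintro rfl
  exact hn (by simpa using hA)

theorem Phi_eq_sum_moebius {n : ℕ} (hn : n ≠ 1) :
    (Phi n : ℤ) = ∑ d ∈ n.divisors, μ d * 2 ^ (n / d) := by
  obtain rfl | hn0 := eq_or_ne n 0
  · decide
  calc (Phi n : ℤ)
      = ∑ A ∈ (Icc 1 n).powerset, if (A.gcd id).Coprime n then 1 else 0 := by
        rw [Phi_eq_card_coprime hn, card_filter, Nat.cast_sum]
        simp only [Nat.cast_ite, Nat.cast_one, Nat.cast_zero]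
    _ = ∑ A ∈ (Icc 1 n).powerset, ∑ d ∈ n.divisors, if d ∣ A.gcd id then μ d else 0 := by
        simp only [← sum_divisors_filter_dvd_moebius hn0, sum_filter]
    _ = ∑ d ∈ n.divisors, μ d * 2 ^ (n / d) := by
        rw [sum_comm]
        refine sum_congr rfl fun d _ => ?_
        rw [← sum_filter, sum_const, card_powerset_Icc_filter_dvd_gcd, nsmul_eq_mul, mul_comm]
        norm_cast

theorem Phi_one_and_Phi_eq_sum_moebius :
    Phi 1 = 1 ∧ ∀ n : ℕ, 2 ≤ n →
      (Phi n : ℤ) = ∑ d ∈ n.divisors, ArithmeticFunction.moebius d * 2 ^ (n / d) :=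
  ⟨by decide, fun _ hn => Phi_eq_sum_moebius (by omega)⟩
end

section
/- For all positive integers n and k, the sum of Φ_k(d) over all positive divisors d of n equals the binomial coefficient C(n,k). -/
/-- `Phik n k` is the number of subsets `A` of `{1,2,...,n}` of cardinality `k`
such that `gcd(A)` is relatively prime to `n`. -/
def Phik (n k : ℕ) : ℕ :=
  ((Finset.Icc 1 n).powerset.filter
    (fun A => A.card = k ∧ Nat.gcd (A.gcd id) n = 1)).card

lemma Phik_eq (n k : ℕ) : Phik n k =
    ((Finset.powersetCard k (Finset.Icc 1 n)).filter
      (fun A => Nat.gcd (A.gcd id) n = 1)).card := by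
  rw [Phik, Finset.powersetCard_eq_filter, Finset.filter_filter]

lemma gcd_image_mul (B : Finset ℕ) (e : ℕ) :
    ((B.image (fun b => b * e)).gcd id) = e * (B.gcd id) := by
  rw [Finset.gcd_image]
  have : (id ∘ fun b => b * e) = fun b => e * (id b) := by
    funext b; simp [mul_comm]
  rw [this, Finset.gcd_mul_left]
  simp

theorem sum_Phik_divisors (n k : ℕ) (hn : 0 < n) (hk : 0 < k) :
    ∑ d ∈ n.divisors, Phik d k = n.choose k := by
  have key : ∀ e ∈ n.divisors,
      Phik (n / e) k =
      ((Finset.powersetCard k (Finset.Icc 1 n)).filter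
        (fun A => Nat.gcd (A.gcd id) n = e)).card := by
    intro e he
    obtain ⟨hed, hn0⟩ := Nat.mem_divisors.mp he
    have he0 : 0 < e := Nat.pos_of_mem_divisors he
    rw [Phik_eq]
    apply Finset.card_bij' (fun B _ => B.image (fun b => b * e))
      (fun A _ => A.image (fun a => a / e))
    · -- left inverse
      intro B hB
      simp only [Finset.mem_filter, Finset.mem_powersetCard] at hB
      rw [Finset.image_image]
      apply Finset.ext
      intro x
      simp only [Finset.mem_image, Function.comp]
      constructor
      · rintro ⟨b, hb, rfl⟩
        rwa [Nat.mul_div_cancel _ he0]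
      · intro hx
        exact ⟨x, hx, Nat.mul_div_cancel _ he0⟩
    · -- right inverse
      intro A hA
      simp only [Finset.mem_filter, Finset.mem_powersetCard] at hA
      obtain ⟨⟨hAsub, hAcard⟩, hAgcd⟩ := hA
      have hediv : ∀ a ∈ A, e ∣ a := by
        intro a ha
        have h1 : e ∣ A.gcd id := hAgcd ▸ Nat.gcd_dvd_left _ _
        exact h1.trans (Finset.gcd_dvd ha)
      rw [Finset.image_image]
      apply Finset.ext
      intro x
      simp only [Finset.mem_image, Function.comp]
      constructor
      · rintro ⟨a, ha, rfl⟩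
        rwa [Nat.div_mul_cancel (hediv a ha)]
      · intro hx
        exact ⟨x, hx, Nat.div_mul_cancel (hediv x hx)⟩
    · -- membership forward
      intro B hB
      simp only [Finset.mem_filter, Finset.mem_powersetCard] at hB ⊢
      obtain ⟨⟨hBsub, hBcard⟩, hBgcd⟩ := hB
      refine ⟨⟨?_, ?_⟩, ?_⟩
      · intro x hx
        simp only [Finset.mem_image] at hx
        obtain ⟨b, hb, rfl⟩ := hx
        have := hBsub hb
        simp only [Finset.mem_Icc] at this ⊢
        constructor
        · exact Nat.mul_pos this.1 he0
        · calc b * e ≤ (n / e) * e := Nat.mul_le_mul_right e this.2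
            _ ≤ n := Nat.div_mul_le_self n e
      · rw [Finset.card_image_of_injective _ (fun a b h => Nat.eq_of_mul_eq_mul_right he0 h)]
        exact hBcard
      · rw [gcd_image_mul]
        conv_lhs => rw [← Nat.div_mul_cancel hed]
        rw [mul_comm (n/e) e, Nat.gcd_mul_left, hBgcd, mul_one]
    · -- membership backward
      intro A hA
      simp only [Finset.mem_filter, Finset.mem_powersetCard] at hA ⊢
      obtain ⟨⟨hAsub, hAcard⟩, hAgcd⟩ := hA
      have hediv : ∀ a ∈ A, e ∣ a := by
        intro a ha
        have h1 : e ∣ A.gcd id := hAgcd ▸ Nat.gcd_dvd_left _ _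
        exact h1.trans (Finset.gcd_dvd ha)
      refine ⟨⟨?_, ?_⟩, ?_⟩
      · intro x hx
        simp only [Finset.mem_image] at hx
        obtain ⟨a, ha, rfl⟩ := hx
        have h := hAsub ha
        simp only [Finset.mem_Icc] at h ⊢
        constructor
        · exact Nat.one_le_div_iff he0 |>.mpr (Nat.le_of_dvd h.1 (hediv a ha))
        · exact Nat.div_le_div_right h.2
      · rw [Finset.card_image_of_injOn]
        · exact hAcard
        · intro a ha b hb hab
          dsimp only at hab
          rw [← Nat.div_mul_cancel (hediv a ha), ← Nat.div_mul_cancel (hediv b hb), hab]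
      · -- gcd condition
        have himg : (A.image (fun a => a / e)).image (fun b => b * e) = A := by
          rw [Finset.image_image]
          apply Finset.ext
          intro x
          simp only [Finset.mem_image, Function.comp]
          constructor
          · rintro ⟨a, ha, rfl⟩
            rwa [Nat.div_mul_cancel (hediv a ha)]
          · intro hx
            exact ⟨x, hx, Nat.div_mul_cancel (hediv x hx)⟩
        have hg : e * ((A.image (fun a => a / e)).gcd id) = A.gcd id := by
          rw [← gcd_image_mul, himg]
        have : e * Nat.gcd ((A.image (fun a => a / e)).gcd id) (n / e) = e := by
          rw [← Nat.gcd_mul_left, hg, Nat.mul_div_cancel' hed, hAgcd]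
        exact Nat.eq_of_mul_eq_mul_left he0 (this.trans (mul_one e).symm)
  calc ∑ d ∈ n.divisors, Phik d k
      = ∑ e ∈ n.divisors, Phik (n / e) k := (Nat.sum_div_divisors n (fun d => Phik d k)).symm
    _ = ∑ e ∈ n.divisors,
        ((Finset.powersetCard k (Finset.Icc 1 n)).filter
          (fun A => Nat.gcd (A.gcd id) n = e)).card := Finset.sum_congr rfl key
    _ = (Finset.powersetCard k (Finset.Icc 1 n)).card := by
        rw [← Finset.card_eq_sum_card_fiberwise]
        intro A hA
        simp only [Finset.mem_coe, Finset.mem_powersetCard] at hA ⊢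
        rw [Nat.mem_divisors]
        exact ⟨Nat.gcd_dvd_right _ _, hn.ne'⟩
    _ = n.choose k := by rw [Finset.card_powersetCard, Nat.card_Icc]; simp
end

section
/- There exists a constant c > 0 such that for all odd positive integers n, |Φ(n) − 2^n| ≤ c·n·2^{n/3}. -/
open Finset

def nonCoprimeGcdSubsets (n : ℕ) : Finset (Finset ℕ) :=
  {A ∈ (Icc 1 n).powerset | A.Nonempty ∧ Nat.gcd (A.gcd id) n ≠ 1}

lemma card_filter_nonempty_powerset {α : Type*} (s : Finset α) :
    #{A ∈ s.powerset | A.Nonempty} = 2 ^ #s - 1 := by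
  classical
  have : {A ∈ s.powerset | A.Nonempty} = s.powerset.erase ∅ := by
    ext A
    simp [nonempty_iff_ne_empty, and_comm]
  rw [this, card_erase_of_mem (empty_mem_powerset s), card_powerset]

lemma Phi_add_card_nonCoprimeGcdSubsets (n : ℕ) :
    Phi n + #(nonCoprimeGcdSubsets n) = 2 ^ n - 1 := by
  have nonempty_count := card_filter_nonempty_powerset (Icc 1 n)
  rw [Nat.card_Icc, add_tsub_cancel_right] at nonempty_count
  rw [← nonempty_count, Phi, nonCoprimeGcdSubsets, ← filter_filter, ← filter_filter]
  exact card_filter_add_card_filter_not _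

lemma nonCoprimeGcdSubsets_subset_biUnion {n : ℕ} (hn : n ≠ 0) :
    nonCoprimeGcdSubsets n ⊆
      n.primeFactors.biUnion fun p => {x ∈ Icc 1 n | p ∣ x}.powerset := by
  intro A hA
  simp only [nonCoprimeGcdSubsets, mem_filter, mem_powerset] at hA
  obtain ⟨hA_sub, -, hgcd⟩ := hA
  obtain ⟨p, hp, hp_dvd⟩ := Nat.exists_prime_and_dvd hgcd
  have hp_mem : p ∈ n.primeFactors :=
    Nat.mem_primeFactors.2 ⟨hp, hp_dvd.trans (Nat.gcd_dvd_right _ _), hn⟩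
  refine mem_biUnion.2 ⟨p, hp_mem, mem_powerset.2 fun x hx => mem_filter.2 ⟨hA_sub hx, ?_⟩⟩
  exact (hp_dvd.trans (Nat.gcd_dvd_left _ _)).trans (Finset.gcd_dvd hx)

lemma card_nonCoprimeGcdSubsets_le_sum {n : ℕ} (hn : n ≠ 0) :
    #(nonCoprimeGcdSubsets n) ≤ ∑ p ∈ n.primeFactors, 2 ^ (n / p) := by
  calc #(nonCoprimeGcdSubsets n)
      ≤ ∑ p ∈ n.primeFactors, #{x ∈ Icc 1 n | p ∣ x}.powerset :=
        (card_le_card (nonCoprimeGcdSubsets_subset_biUnion hn)).trans card_biUnion_le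
    _ = ∑ p ∈ n.primeFactors, 2 ^ (n / p) := by
        simp only [card_powerset, show Icc 1 n = Ioc 0 n from rfl,
          Nat.Ioc_filter_dvd_card_eq_div]

lemma Nat.card_primeFactors_le_self (n : ℕ) : #n.primeFactors ≤ n := by
  rw [Nat.primeFactors_eq_to_filter_divisors_prime]
  exact (card_filter_le _ _).trans (Nat.card_divisors_le_self n)

lemma Odd.three_le_of_mem_primeFactors {n p : ℕ} (hn : Odd n) (hp : p ∈ n.primeFactors) :
    3 ≤ p := by
  have hp_two : p ≠ 2 := by
    rintro rfl
    exact hn.not_two_dvd_nat (Nat.dvd_of_mem_primeFactors hp)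
  have := (Nat.prime_of_mem_primeFactors hp).two_le
  omega

lemma card_nonCoprimeGcdSubsets_le_of_odd {n : ℕ} (hn : Odd n) :
    #(nonCoprimeGcdSubsets n) ≤ n * 2 ^ (n / 3) := by
  calc #(nonCoprimeGcdSubsets n)
      ≤ ∑ p ∈ n.primeFactors, 2 ^ (n / p) := card_nonCoprimeGcdSubsets_le_sum hn.pos.ne'
    _ ≤ ∑ _p ∈ n.primeFactors, 2 ^ (n / 3) := sum_le_sum fun p hp =>
        Nat.pow_le_pow_right two_pos (Nat.div_le_div_left (hn.three_le_of_mem_primeFactors hp)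
          three_pos)
    _ ≤ n * 2 ^ (n / 3) := by
        rw [sum_const, smul_eq_mul]
        exact Nat.mul_le_mul_right _ (Nat.card_primeFactors_le_self n)

lemma two_pow_sub_Phi (n : ℕ) : (2 ^ n : ℝ) - Phi n = 1 + #(nonCoprimeGcdSubsets n) := by
  have h : Phi n + #(nonCoprimeGcdSubsets n) + 1 = 2 ^ n := by
    have := Phi_add_card_nonCoprimeGcdSubsets n
    have := n.one_le_two_pow
    omega
  have h' := congrArg (Nat.cast : ℕ → ℝ) h
  push_cast at h'
  linarith

theorem Phi_asymptotic_odd :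
    ∃ c : ℝ, 0 < c ∧ ∀ n : ℕ, 0 < n → Odd n →
      |(Phi n : ℝ) - 2 ^ n| ≤ c * n * (2 : ℝ) ^ ((n : ℝ) / 3) := by
  refine ⟨2, two_pos, fun n hn hodd => ?_⟩
  have hbad : (#(nonCoprimeGcdSubsets n) : ℝ) ≤ n * 2 ^ (n / 3 : ℕ) := by
    exact_mod_cast card_nonCoprimeGcdSubsets_le_of_odd hodd
  have hpow : (2 : ℝ) ^ (n / 3 : ℕ) ≤ 2 ^ ((n : ℝ) / 3) := by
    rw [← Real.rpow_natCast]
    exact Real.rpow_le_rpow_of_exponent_le one_le_two Nat.cast_div_le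
  have hone : (1 : ℝ) ≤ n * 2 ^ ((n : ℝ) / 3) :=
    one_le_mul_of_one_le_of_one_le (by exact_mod_cast hn)
      (Real.one_le_rpow one_le_two (by positivity))
  rw [abs_sub_comm, two_pow_sub_Phi, abs_of_nonneg (by positivity)]
  nlinarith [mul_le_mul_of_nonneg_left hpow (Nat.cast_nonneg n)]
end

section
/- There exists a constant c > 0 such that for all even positive integers n, |Φ(n) − (2^n − 2^{n/2})| ≤ c·n·2^{n/3}. -/
/-!
Counting the complement: `2 ^ n - Phi n` subsets `A ⊆ {1, …, n}` (the empty one included, since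
`gcd ∅ = 0`) have `gcd (gcd A) n ≠ 1`, i.e. consist of multiples of some prime `p ∣ n`. For each
such `p` there are `2 ^ (n / p)` of them, so the complement lies between `2 ^ (n / 2)` and
`∑ p ∣ n, 2 ^ (n / p)`. For even `n` the prime `2` gives the main term `2 ^ (n / 2)`, and each
of the at most `n` odd primes contributes at most `2 ^ (n / 3)`.
-/

open Finset

lemma Nat.sum_primeFactors_erase_two_pow_div_le (n : ℕ) :
    ∑ p ∈ n.primeFactors.erase 2, 2 ^ (n / p) ≤ n * 2 ^ (n / 3) := by
  have hterm : ∀ p ∈ n.primeFactors.erase 2, 2 ^ (n / p) ≤ 2 ^ (n / 3) := by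
    intro p hp
    obtain ⟨hp2, hpf⟩ := mem_erase.1 hp
    have hp3 : 3 ≤ p := by
      have := (Nat.prime_of_mem_primeFactors hpf).two_le
      omega
    exact Nat.pow_le_pow_right two_pos (Nat.div_le_div_left hp3 three_pos)
  have hcard : #(n.primeFactors.erase 2) ≤ n :=
    calc #(n.primeFactors.erase 2) ≤ #n.primeFactors := card_erase_le
      _ ≤ #n.divisors := card_le_card fun p hp =>
          Nat.mem_divisors.2 ⟨Nat.dvd_of_mem_primeFactors hp, (Nat.mem_primeFactors.1 hp).2.2⟩
      _ ≤ n := Nat.card_divisors_le_self n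
  calc ∑ p ∈ n.primeFactors.erase 2, 2 ^ (n / p) ≤ #(n.primeFactors.erase 2) * 2 ^ (n / 3) := by
        simpa using sum_le_card_nsmul _ _ _ hterm
    _ ≤ n * 2 ^ (n / 3) := Nat.mul_le_mul_right _ hcard

lemma Real.pow_nat_div_le_rpow_div {x : ℝ} (hx : 1 ≤ x) (n k : ℕ) :
    x ^ (n / k) ≤ x ^ ((n : ℝ) / k) := by
  rw [← Real.rpow_natCast]
  exact Real.rpow_le_rpow_of_exponent_le hx Nat.cast_div_le

namespace Phi

def nonCoprimeSubsets (n : ℕ) : Finset (Finset ℕ) :=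
  (Icc 1 n).powerset.filter (fun A => Nat.gcd (A.gcd id) n ≠ 1)

def multipleSubsets (n p : ℕ) : Finset (Finset ℕ) :=
  ((Icc 1 n).filter (p ∣ ·)).powerset

lemma add_card_nonCoprimeSubsets {n : ℕ} (hn : n ≠ 1) :
    Phi n + #(nonCoprimeSubsets n) = 2 ^ n := by
  have hfilter : (Icc 1 n).powerset.filter (fun A => A.Nonempty ∧ Nat.gcd (A.gcd id) n = 1) =
      (Icc 1 n).powerset.filter (fun A => Nat.gcd (A.gcd id) n = 1) := by
    refine filter_congr fun A _ => and_iff_right_of_imp fun hA => ?_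
    rw [nonempty_iff_ne_empty]
    rintro rfl
    simp [hn] at hA
  rw [Phi, hfilter, nonCoprimeSubsets, card_filter_add_card_filter_not, card_powerset,
    Nat.card_Icc, Nat.add_sub_cancel]

lemma mem_multipleSubsets {n p : ℕ} {A : Finset ℕ} :
    A ∈ multipleSubsets n p ↔ A ⊆ Icc 1 n ∧ p ∣ A.gcd id := by
  simp only [multipleSubsets, mem_powerset, Finset.dvd_gcd_iff, id, subset_iff, mem_filter]
  exact ⟨fun h => ⟨fun a ha => (h ha).1, fun a ha => (h ha).2⟩, fun h a ha => ⟨h.1 ha, h.2 a ha⟩⟩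

lemma card_multipleSubsets (n p : ℕ) : #(multipleSubsets n p) = 2 ^ (n / p) := by
  rw [multipleSubsets, card_powerset, ← Nat.Ioc_filter_dvd_card_eq_div]
  rfl

lemma multipleSubsets_subset_nonCoprimeSubsets {n p : ℕ} (hpn : p ∣ n) (hp : p ≠ 1) :
    multipleSubsets n p ⊆ nonCoprimeSubsets n := by
  intro A hA
  obtain ⟨hAsub, hpA⟩ := mem_multipleSubsets.1 hA
  refine mem_filter.2 ⟨mem_powerset.2 hAsub, fun hcop => hp ?_⟩
  rw [← Nat.dvd_one, ← hcop]
  exact Nat.dvd_gcd hpA hpn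

lemma nonCoprimeSubsets_subset_biUnion {n : ℕ} (hn : n ≠ 0) :
    nonCoprimeSubsets n ⊆ n.primeFactors.biUnion (multipleSubsets n) := by
  intro A hA
  obtain ⟨hAsub, hA⟩ := mem_filter.1 hA
  obtain ⟨p, hp, hpd⟩ := Nat.exists_prime_and_dvd hA
  refine mem_biUnion.2 ⟨p, Nat.mem_primeFactors.2 ⟨hp, hpd.trans (Nat.gcd_dvd_right _ _), hn⟩, ?_⟩
  exact mem_multipleSubsets.2 ⟨mem_powerset.1 hAsub, hpd.trans (Nat.gcd_dvd_left _ _)⟩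

lemma card_nonCoprimeSubsets_le {n : ℕ} (hn : n ≠ 0) :
    #(nonCoprimeSubsets n) ≤ ∑ p ∈ n.primeFactors, 2 ^ (n / p) :=
  calc #(nonCoprimeSubsets n) ≤ #(n.primeFactors.biUnion (multipleSubsets n)) :=
        card_le_card (nonCoprimeSubsets_subset_biUnion hn)
    _ ≤ ∑ p ∈ n.primeFactors, #(multipleSubsets n p) := card_biUnion_le
    _ = ∑ p ∈ n.primeFactors, 2 ^ (n / p) := by simp only [card_multipleSubsets]

lemma two_pow_half_le_card_nonCoprimeSubsets {n : ℕ} (h2n : 2 ∣ n) :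
    2 ^ (n / 2) ≤ #(nonCoprimeSubsets n) := by
  rw [← card_multipleSubsets]
  exact card_le_card (multipleSubsets_subset_nonCoprimeSubsets h2n (by norm_num))

lemma card_nonCoprimeSubsets_le_of_two_dvd {n : ℕ} (hn : n ≠ 0) (h2n : 2 ∣ n) :
    #(nonCoprimeSubsets n) ≤ 2 ^ (n / 2) + n * 2 ^ (n / 3) := by
  have h2 : 2 ∈ n.primeFactors := Nat.mem_primeFactors.2 ⟨Nat.prime_two, h2n, hn⟩
  calc #(nonCoprimeSubsets n) ≤ ∑ p ∈ n.primeFactors, 2 ^ (n / p) :=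
        card_nonCoprimeSubsets_le hn
    _ = 2 ^ (n / 2) + ∑ p ∈ n.primeFactors.erase 2, 2 ^ (n / p) := (add_sum_erase _ _ h2).symm
    _ ≤ 2 ^ (n / 2) + n * 2 ^ (n / 3) :=
        Nat.add_le_add_left (Nat.sum_primeFactors_erase_two_pow_div_le n) _

end Phi

theorem Phi_asymptotic_even :
    ∃ c : ℝ, 0 < c ∧ ∀ n : ℕ, 0 < n → Even n →
      |(Phi n : ℝ) - (2 ^ n - 2 ^ (n / 2))| ≤ c * n * (2 : ℝ) ^ ((n : ℝ) / 3) := by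
  refine ⟨1, one_pos, fun n hn hev => ?_⟩
  have h2n : 2 ∣ n := hev.two_dvd
  have hsplit : (Phi n : ℝ) + #(Phi.nonCoprimeSubsets n) = 2 ^ n := by
    exact_mod_cast Phi.add_card_nonCoprimeSubsets (n := n) (by omega)
  have hlower : (2 : ℝ) ^ (n / 2) ≤ #(Phi.nonCoprimeSubsets n) := by
    exact_mod_cast Phi.two_pow_half_le_card_nonCoprimeSubsets h2n
  have hupper : (#(Phi.nonCoprimeSubsets n) : ℝ) ≤ 2 ^ (n / 2) + n * 2 ^ (n / 3) := by
    exact_mod_cast Phi.card_nonCoprimeSubsets_le_of_two_dvd hn.ne' h2n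
  have hrpow : (n : ℝ) * 2 ^ (n / 3) ≤ n * 2 ^ ((n : ℝ) / 3) := by
    simpa using mul_le_mul_of_nonneg_left (Real.pow_nat_div_le_rpow_div one_le_two n 3)
      n.cast_nonneg
  rw [one_mul, abs_of_nonpos (by linarith)]
  linarith
end

section
/- For every positive integer k, there exists a constant c > 0 such that for all odd positive integers n, |Φ_k(n) − C(n,k)| ≤ c·n·C(⌊n/3⌋, k), where C denotes the binomial coefficient. -/
theorem Phik_asymptotic_odd (k : ℕ) (hk : 0 < k) :
    ∃ c : ℝ, 0 < c ∧ ∀ n : ℕ, 0 < n → Odd n →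
      |(Phik n k : ℝ) - (n.choose k : ℝ)| ≤ c * n * ((n / 3).choose k : ℝ) := by
  refine ⟨1, one_pos, fun n hn hodd => ?_⟩
  set T := (Finset.Icc 1 n).powersetCard k with hT
  have hTcard : T.card = n.choose k := by
    rw [hT, Finset.card_powersetCard, Nat.card_Icc]
    simp
  have hPhik : Phik n k = (T.filter (fun A => Nat.gcd (A.gcd id) n = 1)).card := by
    rw [Phik, hT, Finset.powersetCard_eq_filter, Finset.filter_filter]
  set B := T.filter (fun A => ¬ Nat.gcd (A.gcd id) n = 1) with hB
  have hsplit : Phik n k + B.card = n.choose k := by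
    rw [hPhik, hB, ← hTcard]
    exact Finset.card_filter_add_card_filter_not _
  -- bound on B.card
  have hsub : B ⊆ n.primeFactors.biUnion
      (fun p => ((Finset.Icc 1 n).filter (fun m => p ∣ m)).powersetCard k) := by
    intro A hA
    simp only [hB, hT, Finset.mem_filter, Finset.mem_powersetCard] at hA
    obtain ⟨⟨hAsub, hAcard⟩, hAg⟩ := hA
    obtain ⟨p, hp, hpd⟩ := Nat.exists_prime_and_dvd hAg
    have hpn : p ∣ n := hpd.trans (Nat.gcd_dvd_right _ _)
    refine Finset.mem_biUnion.2 ⟨p, Nat.mem_primeFactors.2 ⟨hp, hpn, hn.ne'⟩, ?_⟩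
    rw [Finset.mem_powersetCard]
    refine ⟨fun a ha => Finset.mem_filter.2 ⟨hAsub ha, ?_⟩, hAcard⟩
    exact ((hpd.trans (Nat.gcd_dvd_left _ _)).trans (Finset.gcd_dvd ha))
  have hcard_mult : ∀ p ∈ n.primeFactors,
      ((Finset.Icc 1 n).filter (fun m => p ∣ m)).card ≤ n / 3 := by
    intro p hp
    obtain ⟨hp', hpn, -⟩ := Nat.mem_primeFactors.1 hp
    have hp3 : 3 ≤ p := by
      have h2 : 2 ≤ p := hp'.two_le
      have hne : p ≠ 2 := by
        rintro rfl
        have := Nat.odd_iff.1 hodd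
        omega
      omega
    have hle : ((Finset.Icc 1 n).filter (fun m => p ∣ m)).card ≤ n / p := by
      have : ((Finset.Icc 1 n).filter (fun m => p ∣ m)).card ≤ (Finset.Icc 1 (n / p)).card := by
        apply Finset.card_le_card_of_injOn (fun m => m / p)
        · intro m hm
          simp only [Finset.mem_coe, Finset.mem_filter, Finset.mem_Icc] at hm ⊢
          obtain ⟨⟨h1, h2⟩, hdvd⟩ := hm
          constructor
          · exact Nat.one_le_div_iff (by omega) |>.2 (Nat.le_of_dvd (by omega) hdvd)
          · exact Nat.div_le_div_right h2
        · intro a ha b hb hab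
          simp only [Finset.mem_coe, Finset.mem_filter] at ha hb
          obtain ⟨c, rfl⟩ := ha.2
          obtain ⟨d, rfl⟩ := hb.2
          simp only at hab
          rw [Nat.mul_div_cancel_left _ hp'.pos, Nat.mul_div_cancel_left _ hp'.pos] at hab
          rw [hab]
      simpa [Nat.card_Icc] using this
    calc _ ≤ n / p := hle
      _ ≤ n / 3 := Nat.div_le_div_left hp3 (by norm_num)
  have hBbound : B.card ≤ n * (n / 3).choose k := by
    calc B.card ≤ (n.primeFactors.biUnion
        (fun p => ((Finset.Icc 1 n).filter (fun m => p ∣ m)).powersetCard k)).card :=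
          Finset.card_le_card hsub
      _ ≤ ∑ p ∈ n.primeFactors,
          (((Finset.Icc 1 n).filter (fun m => p ∣ m)).powersetCard k).card :=
          Finset.card_biUnion_le
      _ ≤ ∑ p ∈ n.primeFactors, (n / 3).choose k := by
          apply Finset.sum_le_sum
          intro p hp
          rw [Finset.card_powersetCard]
          exact Nat.choose_le_choose _ (hcard_mult p hp)
      _ = n.primeFactors.card * (n / 3).choose k := by
          rw [Finset.sum_const, smul_eq_mul]
      _ ≤ n * (n / 3).choose k := by
          apply Nat.mul_le_mul_right
          calc n.primeFactors.card ≤ (Finset.Icc 2 n).card := by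
                apply Finset.card_le_card
                intro p hp
                obtain ⟨hp', hpn, -⟩ := Nat.mem_primeFactors.1 hp
                exact Finset.mem_Icc.2 ⟨hp'.two_le, Nat.le_of_dvd hn hpn⟩
            _ ≤ n := by rw [Nat.card_Icc]; omega
  -- conclude
  have hle : (Phik n k : ℝ) ≤ (n.choose k : ℝ) := by
    exact_mod_cast (by omega : Phik n k ≤ n.choose k)
  rw [abs_sub_comm, abs_of_nonneg (by linarith)]
  have : (n.choose k : ℝ) - Phik n k = (B.card : ℝ) := by
    have := hsplit
    push_cast [← this]
    ring
  rw [this, one_mul]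
  exact_mod_cast hBbound
end

section
/- For every positive integer k, there exists a constant c > 0 such that for all even positive integers n, |Φ_k(n) − (C(n,k) − C(n/2,k))| ≤ c·n·C(⌊n/3⌋, k), where C denotes the binomial coefficient. -/
open Finset

def multiplesIcc (n d : ℕ) : Finset ℕ := (Icc 1 n).filter (d ∣ ·)

def nonCoprimeSubsets (n k : ℕ) : Finset (Finset ℕ) :=
  ((Icc 1 n).powersetCard k).filter (fun A => Nat.gcd (A.gcd id) n ≠ 1)

lemma card_multiplesIcc (n d : ℕ) : #(multiplesIcc n d) = n / d :=
  Nat.Ioc_filter_dvd_card_eq_div n d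

lemma subset_multiplesIcc_of_dvd_gcd {n d : ℕ} {A : Finset ℕ} (hA : A ⊆ Icc 1 n)
    (hd : d ∣ A.gcd id) : A ⊆ multiplesIcc n d :=
  fun _ hx => mem_filter.mpr ⟨hA hx, hd.trans (gcd_dvd hx)⟩

lemma Phik_add_card_nonCoprimeSubsets (n k : ℕ) :
    Phik n k + #(nonCoprimeSubsets n k) = n.choose k := by
  have hPhik : Phik n k =
      #(((Icc 1 n).powersetCard k).filter (fun A => Nat.gcd (A.gcd id) n = 1)) := by
    rw [Phik, powersetCard_eq_filter, filter_filter]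
  rw [hPhik, nonCoprimeSubsets, card_filter_add_card_filter_not, card_powersetCard,
    Nat.card_Icc, Nat.add_sub_cancel]

lemma powersetCard_multiplesIcc_subset_nonCoprimeSubsets {n d : ℕ} (k : ℕ) (hd : d ≠ 1)
    (hdn : d ∣ n) : (multiplesIcc n d).powersetCard k ⊆ nonCoprimeSubsets n k := by
  intro A hA
  obtain ⟨hAsub, hAcard⟩ := mem_powersetCard.mp hA
  refine mem_filter.mpr ⟨mem_powersetCard.mpr ⟨hAsub.trans (filter_subset _ _), hAcard⟩, ?_⟩
  have hdA : d ∣ A.gcd id := dvd_gcd fun x hx => (mem_filter.mp (hAsub hx)).2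
  intro hcop
  exact hd (Nat.dvd_one.mp (hcop ▸ Nat.dvd_gcd hdA hdn))

lemma nonCoprimeSubsets_subset {n : ℕ} (k : ℕ) (hn : 0 < n) :
    nonCoprimeSubsets n k ⊆ (multiplesIcc n 2).powersetCard k ∪
      (Icc 3 n).biUnion (fun d => (multiplesIcc n d).powersetCard k) := by
  intro A hA
  obtain ⟨hApow, hne⟩ := mem_filter.mp hA
  obtain ⟨hAsub, hAcard⟩ := mem_powersetCard.mp hApow
  set d := Nat.gcd (A.gcd id) n
  have hdA : d ∣ A.gcd id := Nat.gcd_dvd_left _ _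
  have hdn : d ≤ n := Nat.le_of_dvd hn (Nat.gcd_dvd_right _ _)
  have hd0 : d ≠ 0 := fun h => hn.ne' (Nat.eq_zero_of_gcd_eq_zero_right h)
  by_cases h2 : 2 ∣ d
  · exact mem_union_left _ <| mem_powersetCard.mpr
      ⟨subset_multiplesIcc_of_dvd_gcd hAsub (h2.trans hdA), hAcard⟩
  · have hd3 : 3 ≤ d := by omega
    exact mem_union_right _ <| mem_biUnion.mpr ⟨d, mem_Icc.mpr ⟨hd3, hdn⟩,
      mem_powersetCard.mpr ⟨subset_multiplesIcc_of_dvd_gcd hAsub hdA, hAcard⟩⟩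

lemma card_biUnion_powersetCard_multiplesIcc_le (n k : ℕ) :
    #((Icc 3 n).biUnion fun d => (multiplesIcc n d).powersetCard k) ≤ n * (n / 3).choose k :=
  calc _ ≤ ∑ d ∈ Icc 3 n, #((multiplesIcc n d).powersetCard k) := card_biUnion_le
    _ ≤ ∑ _d ∈ Icc 3 n, (n / 3).choose k := by
        refine sum_le_sum fun d hd => ?_
        rw [card_powersetCard, card_multiplesIcc]
        exact Nat.choose_le_choose k (Nat.div_le_div_left (mem_Icc.mp hd).1 (by norm_num))
    _ = (n + 1 - 3) * (n / 3).choose k := by rw [sum_const, Nat.card_Icc, smul_eq_mul]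
    _ ≤ n * (n / 3).choose k := Nat.mul_le_mul_right _ (by omega)

lemma card_nonCoprimeSubsets_le {n : ℕ} (k : ℕ) (hn : 0 < n) :
    #(nonCoprimeSubsets n k) ≤ (n / 2).choose k + n * (n / 3).choose k :=
  calc _ ≤ _ := card_le_card (nonCoprimeSubsets_subset k hn)
    _ ≤ _ := card_union_le _ _
    _ ≤ _ := by
        rw [card_powersetCard, card_multiplesIcc]
        exact Nat.add_le_add_left (card_biUnion_powersetCard_multiplesIcc_le n k) _

lemma choose_half_le_card_nonCoprimeSubsets {n : ℕ} (k : ℕ) (hn : Even n) :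
    (n / 2).choose k ≤ #(nonCoprimeSubsets n k) := by
  rw [← card_multiplesIcc, ← card_powersetCard]
  exact card_le_card
    (powersetCard_multiplesIcc_subset_nonCoprimeSubsets k (by norm_num) hn.two_dvd)

theorem Phik_asymptotic_even_general (k : ℕ) :
    ∃ c : ℝ, 0 < c ∧ ∀ n : ℕ, 0 < n → Even n →
      |(Phik n k : ℝ) - ((n.choose k : ℝ) - ((n / 2).choose k : ℝ))| ≤
        c * n * ((n / 3).choose k : ℝ) := by
  refine ⟨1, one_pos, fun n hn hev => ?_⟩
  have hPhik : (Phik n k : ℝ) = n.choose k - #(nonCoprimeSubsets n k) := by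
    rw [← Phik_add_card_nonCoprimeSubsets]
    push_cast
    ring
  have hlow : ((n / 2).choose k : ℝ) ≤ #(nonCoprimeSubsets n k) := by
    exact_mod_cast choose_half_le_card_nonCoprimeSubsets k hev
  have hup : (#(nonCoprimeSubsets n k) : ℝ) ≤ (n / 2).choose k + n * (n / 3).choose k := by
    exact_mod_cast card_nonCoprimeSubsets_le k hn
  rw [hPhik, abs_le, one_mul]
  constructor <;> linarith

theorem Phik_asymptotic_even (k : ℕ) (hk : 0 < k) :
    ∃ c : ℝ, 0 < c ∧ ∀ n : ℕ, 0 < n → Even n →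
      |(Phik n k : ℝ) - ((n.choose k : ℝ) - ((n / 2).choose k : ℝ))| ≤
        c * n * ((n / 3).choose k : ℝ) :=
  Phik_asymptotic_even_general k
end

section
/- The ratio f(n)/2^n tends to 1 as n tends to infinity; that is, f(n) is asymptotic to 2^n, so almost all finite subsets of {1,2,...,n} are relatively prime. -/
lemma f_le (n : ℕ) : f n ≤ 2 ^ n := by
  calc f n ≤ (Finset.Icc 1 n).powerset.card := Finset.card_filter_le _ _
    _ = 2 ^ n := by rw [Finset.card_powerset, Nat.card_Icc]; simp

lemma key (n : ℕ) : 2 ^ n ≤ f n + (1 + n * 2 ^ (n / 2)) := by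
  classical
  have hsplit : f n + (((Finset.Icc 1 n).powerset.filter
      (fun A => ¬(A.Nonempty ∧ A.gcd id = 1))).card) = 2 ^ n := by
    rw [f, Finset.card_filter_add_card_filter_not, Finset.card_powerset,
      Nat.card_Icc]; simp
  set bad := (Finset.Icc 1 n).powerset.filter (fun A => ¬(A.Nonempty ∧ A.gcd id = 1)) with hbad
  have hsub : bad ⊆ insert (∅ : Finset ℕ)
      ((Finset.Icc 2 n).biUnion fun d => ((Finset.Icc 1 n).filter (d ∣ ·)).powerset) := by
    intro A hA
    simp only [hbad, Finset.mem_filter, Finset.mem_powerset] at hA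
    obtain ⟨hAsub, hAbad⟩ := hA
    rcases A.eq_empty_or_nonempty with rfl | hne
    · exact Finset.mem_insert_self _ _
    · refine Finset.mem_insert_of_mem ?_
      have hg1 : A.gcd id ≠ 1 := fun h => hAbad ⟨hne, h⟩
      obtain ⟨x, hx⟩ := hne
      have hxmem := hAsub hx
      rw [Finset.mem_Icc] at hxmem
      have hdvdx : A.gcd id ∣ x := Finset.gcd_dvd hx
      have hg0 : A.gcd id ≠ 0 := by
        intro h; rw [h] at hdvdx
        have := Nat.eq_zero_of_zero_dvd hdvdx
        omega
      have hgle : A.gcd id ≤ n := le_trans (Nat.le_of_dvd hxmem.1 hdvdx) hxmem.2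
      refine Finset.mem_biUnion.2 ⟨A.gcd id, Finset.mem_Icc.2 ⟨by omega, hgle⟩, ?_⟩
      rw [Finset.mem_powerset]
      intro y hy
      exact Finset.mem_filter.2 ⟨hAsub hy, Finset.gcd_dvd hy⟩
  have hcardmul : ∀ d ∈ Finset.Icc 2 n,
      (((Finset.Icc 1 n).filter (d ∣ ·)).powerset).card ≤ 2 ^ (n / 2) := by
    intro d hd
    rw [Finset.mem_Icc] at hd
    rw [Finset.card_powerset]
    have h1 : Finset.Icc 1 n = Finset.Ioc 0 n := rfl
    have h2 : ((Finset.Icc 1 n).filter (d ∣ ·)).card = n / d := by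
      rw [h1]; exact Nat.Ioc_filter_dvd_card_eq_div n d
    rw [h2]
    exact Nat.pow_le_pow_right (by norm_num) (Nat.div_le_div_left hd.1 (by norm_num))
  have hbadcard : bad.card ≤ 1 + n * 2 ^ (n / 2) := by
    calc bad.card ≤ (insert (∅ : Finset ℕ)
        ((Finset.Icc 2 n).biUnion fun d => ((Finset.Icc 1 n).filter (d ∣ ·)).powerset)).card :=
          Finset.card_le_card hsub
      _ ≤ 1 + ((Finset.Icc 2 n).biUnion fun d =>
          ((Finset.Icc 1 n).filter (d ∣ ·)).powerset).card := by
            rw [add_comm]; exact Finset.card_insert_le _ _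
      _ ≤ 1 + ∑ d ∈ Finset.Icc 2 n, (((Finset.Icc 1 n).filter (d ∣ ·)).powerset).card := by
            gcongr; exact Finset.card_biUnion_le
      _ ≤ 1 + ∑ _d ∈ Finset.Icc 2 n, 2 ^ (n / 2) := by
            gcongr with d hd; exact hcardmul d hd
      _ ≤ 1 + n * 2 ^ (n / 2) := by
            rw [Finset.sum_const, Nat.card_Icc, smul_eq_mul]
            exact Nat.add_le_add_left (Nat.mul_le_mul_right _ (by omega)) 1
  omega

theorem f_asymptotic :
    Filter.Tendsto (fun n : ℕ => (f n : ℝ) / 2 ^ n) Filter.atTop (nhds 1) := by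
  have hsq2 : (0:ℝ) < Real.sqrt 2 := Real.sqrt_pos.2 (by norm_num)
  -- the error term tends to 0
  have herr : Filter.Tendsto
      (fun n : ℕ => ((1 : ℝ) + n * 2 ^ (n / 2)) / 2 ^ n) Filter.atTop (nhds 0) := by
    have h1 : Filter.Tendsto (fun n : ℕ => (1 : ℝ) / 2 ^ n) Filter.atTop (nhds 0) := by
      refine (tendsto_pow_atTop_nhds_zero_of_lt_one
        (by norm_num : (0:ℝ) ≤ 1/2) (by norm_num : (1:ℝ)/2 < 1)).congr fun n => ?_
      rw [div_pow, one_pow]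
    have h2 : Filter.Tendsto (fun n : ℕ => (n : ℝ) * 2 ^ (n / 2) / 2 ^ n)
        Filter.atTop (nhds 0) := by
      have hb : ∀ n : ℕ, (n : ℝ) * 2 ^ (n / 2) / 2 ^ n ≤ n * (Real.sqrt 2 / 2) ^ n := by
        intro n
        have hpow : (2:ℝ) ^ (n / 2 : ℕ) ≤ Real.sqrt 2 ^ n := by
          have h1 : Real.sqrt 2 ^ n = (2:ℝ) ^ ((n:ℝ) / 2) := by
            rw [Real.sqrt_eq_rpow, ← Real.rpow_natCast ((2:ℝ) ^ ((1:ℝ)/2)) n,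
              ← Real.rpow_mul (by norm_num)]
            congr 1; ring
          rw [h1, ← Real.rpow_natCast (2:ℝ) (n / 2)]
          apply Real.rpow_le_rpow_of_exponent_le (by norm_num)
          exact_mod_cast Nat.cast_div_le
        rw [div_pow, mul_div_assoc]
        gcongr
      have hnn : ∀ n : ℕ, (0:ℝ) ≤ (n : ℝ) * 2 ^ (n / 2) / 2 ^ n := by
        intro n; positivity
      refine squeeze_zero hnn hb ?_
      have : |Real.sqrt 2 / 2| < 1 := by
        rw [abs_of_pos (by positivity), div_lt_one (by norm_num)]
        nlinarith [Real.sq_sqrt (by norm_num : (0:ℝ) ≤ 2), Real.sqrt_nonneg 2]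
      simpa using tendsto_self_mul_const_pow_of_abs_lt_one this
    have := h1.add h2
    simpa [add_div] using this
  have hlow : Filter.Tendsto
      (fun n : ℕ => 1 - ((1 : ℝ) + n * 2 ^ (n / 2)) / 2 ^ n) Filter.atTop (nhds 1) := by
    simpa using (tendsto_const_nhds (x := (1:ℝ))).sub herr
  refine tendsto_of_tendsto_of_tendsto_of_le_of_le hlow tendsto_const_nhds ?_ ?_
  · intro n
    have h2 : (0:ℝ) < 2 ^ n := by positivity
    rw [sub_le_iff_le_add, ← add_div, le_div_iff₀ h2, one_mul]
    have := key n
    push_cast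
    exact_mod_cast this
  · intro n
    rw [div_le_one (by positivity : (0:ℝ) < 2 ^ n)]
    exact_mod_cast f_le n
end

section
/- For all integers n ≥ 5, f(n) ≥ 2^{n−1} + 2^{n−2}. -/
open Finset

def relPrimeSubsets (X : Finset ℕ) : Finset (Finset ℕ) :=
  X.powerset.filter fun A => A.Nonempty ∧ A.gcd id = 1

theorem f_eq_card_relPrimeSubsets (n : ℕ) : f n = #(relPrimeSubsets (Icc 1 n)) := rfl

theorem gcd_eq_one_of_coprime_mem {S : Finset ℕ} {a b : ℕ} (ha : a ∈ S) (hb : b ∈ S)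
    (hab : a.Coprime b) : S.gcd id = 1 :=
  Nat.eq_one_of_dvd_one (hab ▸ Nat.dvd_gcd (gcd_dvd ha) (gcd_dvd hb))

theorem Icc_subset_relPrimeSubsets {X T V : Finset ℕ} (a b : ℕ) (hV : V ⊆ X) (ha : a ∈ T)
    (hb : b ∈ T) (hab : a.Coprime b) : Icc T V ⊆ relPrimeSubsets X := by
  intro S hS
  obtain ⟨hTS, hSV⟩ := mem_Icc.mp hS
  exact mem_filter.mpr ⟨mem_powerset.mpr (hSV.trans hV), ⟨a, hTS ha⟩,
    gcd_eq_one_of_coprime_mem (hTS ha) (hTS hb) hab⟩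

theorem disjoint_Icc_finset_of_mem_of_notMem {α : Type*} [DecidableEq α]
    {T V T' V' : Finset α} (a : α) (ha : a ∈ T) (ha' : a ∉ V') :
    Disjoint (Icc T V) (Icc T' V') :=
  disjoint_left.mpr fun _ hS hS' => ha' ((mem_Icc.mp hS').2 ((mem_Icc.mp hS).1 ha))

theorem f_lower_bound (n : ℕ) (hn : 5 ≤ n) :
    2 ^ (n - 1) + 2 ^ (n - 2) ≤ f n := by
  set X := Icc 1 n
  set A := Icc {1} X
  set B := Icc {2, 3} (X \ {1})
  set C := Icc {4, 5} (X \ {1, 2})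
  set D := Icc {2, 5} (X \ {1, 3})
  have hcard : #A + (#B + (#C + #D)) = 2 ^ (n - 1) + 2 ^ (n - 2) := by
    obtain ⟨m, rfl⟩ : ∃ m, n = m + 5 := ⟨n - 5, by omega⟩
    simp [A, B, C, D, X, card_Icc_finset, card_sdiff_of_subset, insert_subset_iff, pow_succ]
    ring
  have hdisj : Disjoint A (B ∪ (C ∪ D)) ∧ Disjoint B (C ∪ D) ∧ Disjoint C D := by
    simp only [disjoint_union_right]
    refine ⟨⟨?_, ?_, ?_⟩, ⟨?_, ?_⟩, Disjoint.symm ?_⟩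
    · exact disjoint_Icc_finset_of_mem_of_notMem 1 (by simp) (by simp)
    · exact disjoint_Icc_finset_of_mem_of_notMem 1 (by simp) (by simp)
    · exact disjoint_Icc_finset_of_mem_of_notMem 1 (by simp) (by simp)
    · exact disjoint_Icc_finset_of_mem_of_notMem 2 (by simp) (by simp)
    · exact disjoint_Icc_finset_of_mem_of_notMem 3 (by simp) (by simp)
    · exact disjoint_Icc_finset_of_mem_of_notMem 2 (by simp) (by simp)
  have hrelPrime : A ∪ (B ∪ (C ∪ D)) ⊆ relPrimeSubsets X := by
    simp only [union_subset_iff]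
    refine ⟨?_, ?_, ?_, ?_⟩
    · exact Icc_subset_relPrimeSubsets 1 1 subset_rfl (by simp) (by simp) (by norm_num)
    · exact Icc_subset_relPrimeSubsets 2 3 sdiff_subset (by simp) (by simp) (by norm_num)
    · exact Icc_subset_relPrimeSubsets 4 5 sdiff_subset (by simp) (by simp) (by norm_num)
    · exact Icc_subset_relPrimeSubsets 2 5 sdiff_subset (by simp) (by simp) (by norm_num)
  calc 2 ^ (n - 1) + 2 ^ (n - 2) = #(A ∪ (B ∪ (C ∪ D))) := by
        rw [card_union_of_disjoint hdisj.1, card_union_of_disjoint hdisj.2.1,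
          card_union_of_disjoint hdisj.2.2, hcard]
    _ ≤ f n := (card_le_card hrelPrime).trans_eq (f_eq_card_relPrimeSubsets n).symm
end

section
/- For every positive integer n and every positive divisor d of n, the number of nonempty subsets A of {1,2,...,n} such that gcd(gcd(A), n) = d equals Φ(n/d). -/
/-!
Multiplication by `d` is a bijection from the nonempty subsets `B` of `{1, …, m}` with
`gcd(gcd B, m) = 1` onto the nonempty subsets `A` of `{1, …, d m}` with `gcd(gcd A, d m) = d`:
every element of such an `A` is a multiple of `d`, and `gcd(d g, d m) = d · gcd(g, m)`.
-/

open Finset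

namespace Finset

theorem gcd_image_mul_left (d : ℕ) (B : Finset ℕ) :
    (B.image (d * ·)).gcd id = d * B.gcd id := by
  rw [gcd_image]
  exact (gcd_mul_left (f := id) (a := d)).trans (by rw [normalize_eq])

theorem exists_image_mul_left_eq {d : ℕ} {A : Finset ℕ} (h : ∀ a ∈ A, d ∣ a) :
    ∃ B : Finset ℕ, B.image (d * ·) = A := by
  obtain ⟨B, -, hB⟩ := subset_set_image_iff.mp fun a ha => by
    obtain ⟨c, rfl⟩ := h a ha
    exact ⟨c, Set.mem_univ c, rfl⟩
  exact ⟨B, hB⟩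

theorem image_mul_left_subset_Icc_iff {d : ℕ} (hd : 0 < d) (m : ℕ) {B : Finset ℕ} :
    B.image (d * ·) ⊆ Icc 1 (d * m) ↔ B ⊆ Icc 1 m := by
  rw [image_subset_iff, subset_iff]
  simp only [mem_Icc, Nat.one_le_iff_ne_zero, mul_ne_zero_iff, ne_eq, hd.ne', not_false_eq_true,
    true_and, Nat.mul_le_mul_left_iff hd]

end Finset

def subsetsWithGcd (n d : ℕ) : Finset (Finset ℕ) :=
  (Icc 1 n).powerset.filter fun A => A.Nonempty ∧ Nat.gcd (A.gcd id) n = d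

theorem dvd_of_mem_subsetsWithGcd {n d : ℕ} {A : Finset ℕ} (hA : A ∈ subsetsWithGcd n d) :
    ∀ a ∈ A, d ∣ a :=
  dvd_gcd_iff.mp ((mem_filter.mp hA).2.2 ▸ Nat.gcd_dvd_left _ _)

theorem image_mul_left_mem_subsetsWithGcd_iff {d m : ℕ} (hd : 0 < d) {B : Finset ℕ} :
    B.image (d * ·) ∈ subsetsWithGcd (d * m) d ↔ B ∈ subsetsWithGcd m 1 := by
  simp only [subsetsWithGcd, mem_filter, mem_powerset, image_nonempty, gcd_image_mul_left,
    Nat.gcd_mul_left, Nat.mul_eq_left hd.ne', image_mul_left_subset_Icc_iff hd]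

theorem subsetsWithGcd_mul_left_eq_image {d m : ℕ} (hd : 0 < d) :
    subsetsWithGcd (d * m) d = (subsetsWithGcd m 1).image (image (d * ·)) := by
  ext A
  rw [mem_image]
  constructor
  · intro hA
    obtain ⟨B, rfl⟩ := exists_image_mul_left_eq (dvd_of_mem_subsetsWithGcd hA)
    exact ⟨B, (image_mul_left_mem_subsetsWithGcd_iff hd).mp hA, rfl⟩
  · rintro ⟨B, hB, rfl⟩
    exact (image_mul_left_mem_subsetsWithGcd_iff hd).mpr hB

theorem card_subsetsWithGcd_mul_left {d : ℕ} (m : ℕ) (hd : 0 < d) :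
    #(subsetsWithGcd (d * m) d) = #(subsetsWithGcd m 1) := by
  rw [subsetsWithGcd_mul_left_eq_image hd,
    card_image_of_injective _ (image_injective (mul_right_injective₀ hd.ne'))]

theorem card_gcd_eq_d_general (n d : ℕ) (hd : d ∣ n) (hd0 : 0 < d) :
    ((Finset.Icc 1 n).powerset.filter
      (fun A => A.Nonempty ∧ Nat.gcd (A.gcd id) n = d)).card = Phi (n / d) := by
  obtain ⟨m, rfl⟩ := hd
  rw [Nat.mul_div_cancel_left m hd0]
  exact card_subsetsWithGcd_mul_left m hd0

theorem card_gcd_eq_d (n d : ℕ) (hn : 0 < n) (hd : d ∣ n) (hd0 : 0 < d) :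
    ((Finset.Icc 1 n).powerset.filter
      (fun A => A.Nonempty ∧ Nat.gcd (A.gcd id) n = d)).card = Phi (n / d) :=
  card_gcd_eq_d_general n d hd hd0
end
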